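/- arXiv:1212.1481 — 4 statements merged into one kernel-verified Lean document; each statement's English description precedes it below -/
import Mathlib

section
/- Let (Ω, λ) be a probability measure space, T : Ω → Ω a measure-preserving ergodic transformation, and f : Ω → ℝ≥0 a measurable non-negative function. If the function g(ω) := f(T ω) − f(ω) is integrable (belongs to L¹(Ω, λ)), then for λ-almost every ω ∈ Ω one has lim_{n → ∞} f(Tⁿ ω)/n = 0. -/
/-!
`f (Tⁿ ω) - f ω` is the `n`-th Birkhoff sum of `g = f ∘ T - f`, and `∫ g = 0`. For `ε > 0` the
set where `f (Tⁿ ω) > ε n` infinitely often can only grow under `T⁻¹`, so by ergodicity it is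
null or conull. If it were conull, the Birkhoff sums of `g - ε / 2` would be positive somewhere
along almost every orbit, and the maximal ergodic theorem would give `∫ (g - ε / 2) ≥ 0`,
which is absurd. Applied to `f` and to `-f`, this gives `f (Tⁿ ω) = o(n)` almost everywhere.
-/

open MeasureTheory Filter Function Asymptotics

namespace MeasureTheory.MeasurePreserving

variable {α : Type*} [MeasurableSpace α] {μ : Measure α} {T : α → α} {φ : α → ℝ}

theorem integral_comp_of_aestronglyMeasurable (hT : MeasurePreserving T μ μ)
    (hφ : AEStronglyMeasurable φ μ) : ∫ x, φ (T x) ∂μ = ∫ x, φ x ∂μ := by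
  rw [← integral_map hT.aemeasurable (hT.map_eq.symm ▸ hφ), hT.map_eq]

theorem integral_comp_sub_self_of_integrable (hT : MeasurePreserving T μ μ)
    (hφ : Integrable φ μ) : ∫ x, (φ (T x) - φ x) ∂μ = 0 := by
  have hφT : Integrable (fun x => φ (T x)) μ := hT.integrable_comp_of_integrable hφ
  rw [integral_sub hφT hφ, hT.integral_comp_of_aestronglyMeasurable hφ.aestronglyMeasurable,
    sub_self]

/-- Truncate `φ` at height `M`: the truncations are integrable, and their differences along `T`
are dominated by `|φ ∘ T - φ|`. -/
theorem integral_comp_sub_self [IsFiniteMeasure μ] (hT : MeasurePreserving T μ μ)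
    (hφ : AEStronglyMeasurable φ μ) (hint : Integrable (fun x => φ (T x) - φ x) μ) :
    ∫ x, (φ (T x) - φ x) ∂μ = 0 := by
  set clamp : ℕ → ℝ → ℝ := fun M t => max (-M) (min t M)
  have clamp_sub_le M s t : |clamp M s - clamp M t| ≤ |s - t| := by
    calc |clamp M s - clamp M t| ≤ |min s M - min t M| := by
          simpa only [clamp, max_comm] using abs_max_sub_max_le_abs (min s M) (min t M) (-M : ℝ)
      _ ≤ |s - t| := by simpa using abs_min_sub_min_le_max s (M : ℝ) t M
  have clamp_eventually_eq t : ∀ᶠ M : ℕ in atTop, clamp M t = t := by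
    filter_upwards [tendsto_natCast_atTop_atTop.eventually_ge_atTop |t|] with M hM
    simp only [clamp, min_eq_left ((le_abs_self t).trans hM),
      max_eq_right (neg_le.mp ((neg_le_abs t).trans hM))]
  have hclamp M : Integrable (fun x => clamp M (φ x)) μ := by
    refine Integrable.of_bound ((by fun_prop : Continuous (clamp M)).comp_aestronglyMeasurable hφ)
      M (ae_of_all _ fun x => ?_)
    simp [clamp, abs_le]
  have hlim : Tendsto (fun M : ℕ => ∫ x, (clamp M (φ (T x)) - clamp M (φ x)) ∂μ) atTop
      (nhds (∫ x, (φ (T x) - φ x) ∂μ)) := by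
    refine tendsto_integral_of_dominated_convergence (fun x => |φ (T x) - φ x|)
      (fun M => ?_) hint.abs (fun M => ae_of_all _ fun x => clamp_sub_le M _ _)
      (ae_of_all _ fun x => ?_)
    · exact (hT.integrable_comp_of_integrable (hclamp M)).aestronglyMeasurable.sub
        (hclamp M).aestronglyMeasurable
    · refine tendsto_const_nhds.congr' ?_
      filter_upwards [clamp_eventually_eq (φ (T x)), clamp_eventually_eq (φ x)] with M h₁ h₂
      rw [h₁, h₂]
  simp only [fun M => hT.integral_comp_sub_self_of_integrable (hclamp M)] at hlim
  exact tendsto_nhds_unique hlim tendsto_const_nhds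

end MeasureTheory.MeasurePreserving

section BirkhoffMax

variable {α : Type*} (T : α → α) (h : α → ℝ)

/-- `birkhoffMax T h N x = max_{n ≤ N} birkhoffSum T h n x`. -/
noncomputable def birkhoffMax : ℕ → α → ℝ
  | 0 => fun _ => 0
  | N + 1 => fun x => max 0 (h x + birkhoffMax N (T x))

@[simp]
theorem birkhoffMax_zero (x : α) : birkhoffMax T h 0 x = 0 := rfl

theorem birkhoffMax_succ (N : ℕ) (x : α) :
    birkhoffMax T h (N + 1) x = max 0 (h x + birkhoffMax T h N (T x)) := rfl

theorem birkhoffMax_nonneg : ∀ N x, 0 ≤ birkhoffMax T h N x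
  | 0, _ => le_rfl
  | _ + 1, _ => le_max_left _ _

theorem birkhoffMax_le_succ : ∀ N x, birkhoffMax T h N x ≤ birkhoffMax T h (N + 1) x
  | 0, x => birkhoffMax_nonneg T h 1 x
  | N + 1, x => max_le_max le_rfl (add_le_add_right (birkhoffMax_le_succ N (T x)) _)

theorem birkhoffMax_mono (x : α) : Monotone fun N => birkhoffMax T h N x :=
  monotone_nat_of_le_succ fun N => birkhoffMax_le_succ T h N x

theorem birkhoffSum_le_birkhoffMax : ∀ n x, birkhoffSum T h n x ≤ birkhoffMax T h n x
  | 0, x => by simp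
  | n + 1, x => by
    rw [birkhoffSum_succ', birkhoffMax_succ]
    exact le_max_of_le_right (add_le_add_right (birkhoffSum_le_birkhoffMax n (T x)) _)

/-- Where `birkhoffMax T h (N + 1)` is positive it equals `h + birkhoffMax T h N ∘ T`;
elsewhere it vanishes. -/
theorem birkhoffMax_sub_birkhoffMax_comp_le_indicator (N : ℕ) (x : α) :
    birkhoffMax T h (N + 1) x - birkhoffMax T h (N + 1) (T x) ≤
      {y | 0 < birkhoffMax T h (N + 1) y}.indicator h x := by
  by_cases hx : 0 < birkhoffMax T h (N + 1) x
  · rw [Set.indicator_of_mem (show x ∈ {y | 0 < birkhoffMax T h (N + 1) y} from hx)]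
    rw [birkhoffMax_succ, lt_max_iff, lt_self_iff_false, false_or] at hx
    rw [birkhoffMax_succ T h N x, max_eq_right hx.le]
    linarith [birkhoffMax_le_succ T h N (T x)]
  · rw [Set.indicator_of_notMem (show x ∉ {y | 0 < birkhoffMax T h (N + 1) y} from hx)]
    linarith [birkhoffMax_nonneg T h (N + 1) (T x)]

end BirkhoffMax

section MaximalErgodic

variable {α : Type*} [MeasurableSpace α] {μ : Measure α} {T : α → α} {h : α → ℝ}

theorem integrable_birkhoffMax (hT : MeasurePreserving T μ μ) (hh : Integrable h μ) :
    ∀ N, Integrable (birkhoffMax T h N) μ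
  | 0 => integrable_zero α ℝ μ
  | N + 1 => (integrable_zero α ℝ μ).sup
      (hh.add (hT.integrable_comp_of_integrable (integrable_birkhoffMax hT hh N)))

theorem measurableSet_birkhoffMax_pos (hT : Measurable T) (hh : Measurable h) (N : ℕ) :
    MeasurableSet {x | 0 < birkhoffMax T h N x} := by
  refine measurableSet_lt measurable_const ?_
  induction N with
  | zero => exact measurable_const
  | succ N ih => exact measurable_const.max (hh.add (ih.comp hT))

theorem setIntegral_birkhoffMax_pos_nonneg (hT : MeasurePreserving T μ μ) (hhm : Measurable h)
    (hh : Integrable h μ) (N : ℕ) : 0 ≤ ∫ x in {x | 0 < birkhoffMax T h (N + 1) x}, h x ∂μ := by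
  set M := birkhoffMax T h (N + 1)
  have hM : Integrable M μ := integrable_birkhoffMax hT hh (N + 1)
  have hMT : Integrable (fun x => M (T x)) μ := hT.integrable_comp_of_integrable hM
  have hs := measurableSet_birkhoffMax_pos hT.measurable hhm (N + 1)
  rw [← integral_indicator hs]
  calc 0 = ∫ x, (M x - M (T x)) ∂μ := by
        rw [integral_sub hM hMT, hT.integral_comp_of_aestronglyMeasurable hM.aestronglyMeasurable,
          sub_self]
    _ ≤ _ := integral_mono (hM.sub hMT) (hh.indicator hs)
        (birkhoffMax_sub_birkhoffMax_comp_le_indicator T h N)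

/-- The maximal ergodic theorem (Garsia's proof). -/
theorem integral_nonneg_of_ae_exists_birkhoffSum_pos (hT : MeasurePreserving T μ μ)
    (hhm : Measurable h) (hh : Integrable h μ) (hpos : ∀ᵐ x ∂μ, ∃ n, 0 < birkhoffSum T h n x) :
    0 ≤ ∫ x, h x ∂μ := by
  set E : ℕ → Set α := fun N => {x | 0 < birkhoffMax T h (N + 1) x}
  have hE : ∀ᵐ x ∂μ, x ∈ ⋃ N, E N := by
    filter_upwards [hpos] with x ⟨n, hn⟩
    obtain _ | N := n
    · simp at hn
    · exact Set.mem_iUnion.2 ⟨N, hn.trans_le (birkhoffSum_le_birkhoffMax T h _ x)⟩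
  have hlim := tendsto_setIntegral_of_monotone
    (fun N => measurableSet_birkhoffMax_pos hT.measurable hhm (N + 1))
    (fun _ _ hab x hx => hx.trans_le (birkhoffMax_mono T h x (Nat.succ_le_succ hab)))
    hh.integrableOn
  rw [Measure.restrict_eq_self_of_ae_mem hE] at hlim
  exact ge_of_tendsto' hlim (setIntegral_birkhoffMax_pos_nonneg hT hhm hh)

end MaximalErgodic

section Sublinear

variable {α : Type*} {T : α → α} {f : α → ℝ}

theorem birkhoffSum_comp_sub_self (n : ℕ) (x : α) :
    birkhoffSum T (fun y => f (T y) - f y) n x = f (T^[n] x) - f x := by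
  simp only [birkhoffSum, ← iterate_succ_apply' T]
  exact Finset.sum_range_sub (fun k => f (T^[k] x)) n

theorem birkhoffSum_sub_const (h : α → ℝ) (c : ℝ) (n : ℕ) (x : α) :
    birkhoffSum T (fun y => h y - c) n x = birkhoffSum T h n x - n * c := by
  simp [birkhoffSum, Finset.sum_sub_distrib]

theorem setOf_frequently_lt_subset_preimage {ε : ℝ} (hε : 0 ≤ ε) :
    {x | ∃ᶠ n in atTop, ε * n < f (T^[n] x)} ⊆
      T ⁻¹' {x | ∃ᶠ n in atTop, ε * n < f (T^[n] x)} := by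
  intro x hx
  simp only [Set.mem_preimage, Set.mem_ofPred_eq, frequently_atTop] at hx ⊢
  intro N
  obtain ⟨_ | n, hn, hlt⟩ := hx (N + 1)
  · omega
  refine ⟨n, by omega, ?_⟩
  rw [← iterate_succ_apply]
  calc ε * n ≤ ε * (n + 1 : ℕ) := by gcongr; omega
    _ < _ := hlt

variable [MeasurableSpace α]

theorem measurableSet_setOf_frequently_lt (hT : Measurable T) (hf : Measurable f) (ε : ℝ) :
    MeasurableSet {x | ∃ᶠ n in atTop, ε * n < f (T^[n] x)} := by
  simp only [frequently_atTop, Set.ofPred_forall, Set.ofPred_exists]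
  exact .iInter fun N => .iUnion fun n => (MeasurableSet.const (N ≤ n)).inter
    (measurableSet_lt measurable_const (hf.comp (hT.iterate n)))

variable {μ : Measure α} [IsProbabilityMeasure μ]

theorem Ergodic.ae_eventually_le_mul_iterate (hT : Ergodic T μ) (hf : Measurable f)
    (hg : Integrable (fun x => f (T x) - f x) μ) {ε : ℝ} (hε : 0 < ε) :
    ∀ᵐ x ∂μ, ∀ᶠ n in atTop, f (T^[n] x) ≤ ε * n := by
  rcases hT.ae_empty_or_univ_of_ae_le_preimage
    (measurableSet_setOf_frequently_lt hT.measurable hf ε).nullMeasurableSet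
    (setOf_frequently_lt_subset_preimage hε.le).eventuallyLE with hS | hS
  · filter_upwards [measure_eq_zero_iff_ae_notMem.1 (ae_eq_empty.1 hS)] with x hx
    simpa [not_frequently] using hx
  exfalso
  have hpos : ∀ᵐ x ∂μ, ∃ n, 0 < birkhoffSum T (fun y => f (T y) - f y - ε / 2) n x := by
    filter_upwards [hS.mem_iff] with x hx
    have hxS : ∃ᶠ n in atTop, ε * n < f (T^[n] x) := hx.2 trivial
    obtain ⟨n, hn, hfx⟩ := (hxS.and_eventually <|
      (tendsto_natCast_atTop_atTop.const_mul_atTop (half_pos hε)).eventually_gt_atTop (f x)).exists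
    refine ⟨n, ?_⟩
    rw [birkhoffSum_sub_const, birkhoffSum_comp_sub_self]
    linarith
  have hmean : 0 ≤ ∫ x, (f (T x) - f x - ε / 2) ∂μ :=
    integral_nonneg_of_ae_exists_birkhoffSum_pos hT.toMeasurePreserving
    (((hf.comp hT.measurable).sub hf).sub measurable_const) (hg.sub (integrable_const _)) hpos
  rw [integral_sub hg (integrable_const _),
    hT.toMeasurePreserving.integral_comp_sub_self hf.aestronglyMeasurable hg] at hmean
  simp only [integral_const, probReal_univ, smul_eq_mul, one_mul, zero_sub] at hmean
  linarith

theorem Ergodic.ae_isLittleO_iterate (hT : Ergodic T μ) (hf : Measurable f)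
    (hg : Integrable (fun x => f (T x) - f x) μ) :
    ∀ᵐ x ∂μ, (fun n : ℕ => f (T^[n] x)) =o[atTop] (fun n => (n : ℝ)) := by
  have hg' : Integrable (fun x => -f (T x) - -f x) μ := by
    simpa only [Pi.neg_def, neg_sub, neg_sub_neg] using hg.neg
  have hbound : ∀ᵐ x ∂μ, ∀ k : ℕ, ∀ᶠ n in atTop, |f (T^[n] x)| ≤ 1 / (k + 1) * n := by
    refine ae_all_iff.2 fun k => ?_
    filter_upwards [hT.ae_eventually_le_mul_iterate hf hg k.one_div_pos_of_nat,
      hT.ae_eventually_le_mul_iterate (f := fun x => -f x) hf.neg hg' k.one_div_pos_of_nat]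
      with x hx hx'
    filter_upwards [hx, hx'] with n hn hn'
    exact abs_le.2 ⟨by linarith, hn⟩
  filter_upwards [hbound] with x hx
  refine isLittleO_iff.2 fun c hc => ?_
  obtain ⟨k, hk⟩ := exists_nat_one_div_lt hc
  filter_upwards [hx k] with n hn
  rw [Real.norm_eq_abs, Real.norm_natCast]
  exact hn.trans (by gcongr)

end Sublinear

theorem sublinear_tracking_lemma_general {Ω : Type*} [MeasurableSpace Ω]
    (lam : Measure Ω) [IsProbabilityMeasure lam]
    (T : Ω → Ω) (hT : Ergodic T lam)
    (f : Ω → ℝ) (hf_meas : Measurable f)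
    (hg : Integrable (fun ω => f (T ω) - f ω) lam) :
    ∀ᵐ ω ∂lam, Tendsto (fun n : ℕ => f (T^[n] ω) / n) atTop (nhds 0) := by
  filter_upwards [hT.ae_isLittleO_iterate hf_meas hg] with ω hω
  exact hω.tendsto_div_nhds_zero

/-- If `T` is an ergodic measure-preserving transformation of a probability
space `(Ω, lam)`, `f : Ω → ℝ` is measurable and non-negative, and
`g(ω) = f(Tω) − f(ω)` is integrable, then `f(Tⁿ ω)/n → 0` for `lam`-a.e. `ω`. -/
theorem sublinear_tracking_lemma {Ω : Type*} [MeasurableSpace Ω]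
    (lam : Measure Ω) [IsProbabilityMeasure lam]
    (T : Ω → Ω) (hT : Ergodic T lam)
    (f : Ω → ℝ) (hf_meas : Measurable f) (hf_nonneg : ∀ ω, 0 ≤ f ω)
    (hg : Integrable (fun ω => f (T ω) - f ω) lam) :
    ∀ᵐ ω ∂lam, Tendsto (fun n : ℕ => f (T^[n] ω) / n) atTop (nhds 0) :=
  sublinear_tracking_lemma_general lam T hT f hf_meas hg
end

section
/- For Lebesgue-almost every real number r ∈ (0,1), the continued fraction coefficients a_i(r) satisfy lim_{n → ∞} (a_1(r) + a_2(r) + ⋯ + a_n(r))/n = +∞. -/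
/-!
Chernoff bound and Borel–Cantelli. Fix `M ≥ 1`. The exponential moment
`∫₀¹ exp (-(a₁ + ⋯ + aₙ) / M) dx` is at most `2 ρ_M ^ n` with `ρ_M = cfDecayRate M`: substituting
`x = 1 / (k + u)` on the branch where `a₁ = k` turns the integral over `n + 1` digits into a sum over
`k` of `exp (-k / M)` times integrals over `n` digits against the densities `1 / (c + d u)²`,
`0 ≤ d ≤ c`, and on this class of densities one step costs a factor `ρ_M`. Because the first digit
has the heavy tail `P(a₁ ≥ k) ≈ 1 / k`, `1 - ρ_M` is of order `log M / M`, so for every `C` some `M`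
gives `exp (C / M) ρ_M < 1`; Markov's inequality then makes `P(a₁ + ⋯ + aₙ ≤ C n)` summable in `n`.
-/

open Filter MeasureTheory
open scoped ENNReal

/-- The Gauss map `x ↦ {1/x}`. -/
noncomputable def gaussMap (x : ℝ) : ℝ := Int.fract (1 / x)

/-- The `(i+1)`-st continued fraction coefficient of `r`:
`a_{i+1}(r) = ⌊1 / G^i(r)⌋`, where `G` is the Gauss map, so that
`r = 1/(a_1 + 1/(a_2 + ⋯))`. -/
noncomputable def cfCoeff (r : ℝ) (i : ℕ) : ℕ := ⌊1 / (gaussMap^[i] r)⌋₊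

open Set Real

noncomputable def cfSum (n : ℕ) (x : ℝ) : ℝ := ∑ i ∈ Finset.range n, (cfCoeff x i : ℝ)

lemma measurable_gaussMap : Measurable gaussMap :=
  measurable_fract.comp (measurable_const.div measurable_id)

lemma measurable_cfSum (n : ℕ) : Measurable (cfSum n) :=
  Finset.measurable_sum _ fun i _ =>
    measurable_from_nat.comp (measurable_const.div (measurable_gaussMap.iterate i)).nat_floor

lemma cfCoeff_succ (x : ℝ) (i : ℕ) : cfCoeff x (i + 1) = cfCoeff (gaussMap x) i := by
  rw [cfCoeff, cfCoeff, Function.iterate_succ_apply]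

lemma cfSum_succ (n : ℕ) (x : ℝ) : cfSum (n + 1) x = cfCoeff x 0 + cfSum n (gaussMap x) := by
  simp only [cfSum, Finset.sum_range_succ', cfCoeff_succ, add_comm]

section Branch

variable {k : ℕ} {u : ℝ}

lemma gaussMap_inv_natCast_add (hu : u ∈ Ico (0 : ℝ) 1) : gaussMap ((k + u)⁻¹) = u := by
  rw [gaussMap, one_div, inv_inv, add_comm, ← Int.cast_natCast, Int.fract_add_intCast,
    Int.fract_eq_self.2 hu]

lemma cfCoeff_inv_natCast_add_zero (hu : u ∈ Ico (0 : ℝ) 1) : cfCoeff ((k + u)⁻¹) 0 = k := by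
  rw [cfCoeff, Function.iterate_zero_apply, one_div, inv_inv, add_comm,
    Nat.floor_add_natCast hu.1, Nat.floor_eq_zero.2 hu.2, zero_add]

lemma cfSum_succ_inv_natCast_add (n : ℕ) (hu : u ∈ Ico (0 : ℝ) 1) :
    cfSum (n + 1) ((k + u)⁻¹) = k + cfSum n u := by
  rw [cfSum_succ, cfCoeff_inv_natCast_add_zero hu, gaussMap_inv_natCast_add hu]

lemma one_div_sq_mul_exp_neg_cfSum_succ_inv (n M : ℕ) (c d : ℝ) (hu : u ∈ Ico (0 : ℝ) 1) :
    1 / ((k : ℝ) + 1 + u) ^ 2 *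
        (exp (-(cfSum (n + 1) ((k + 1 + u)⁻¹) / M)) / (c + d * (k + 1 + u)⁻¹) ^ 2)
      = exp (-(((k : ℝ) + 1) / M)) * (exp (-(cfSum n u / M)) / (c * (k + 1) + d + c * u) ^ 2) := by
  have h_sum := cfSum_succ_inv_natCast_add (k := k + 1) n hu
  push_cast at h_sum
  have hau : (0 : ℝ) < k + 1 + u := by linarith [hu.1]
  have h_den : c + d * (k + 1 + u)⁻¹ = (c * (k + 1) + d + c * u) / (k + 1 + u) := by
    field_simp
    ring
  rw [h_den, h_sum, add_div, neg_add, exp_add]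
  field_simp

end Branch

lemma image_inv_add_Ioo {a : ℝ} (ha : 0 < a) :
    (fun u => (a + u)⁻¹) '' Ioo 0 1 = Ioo (a + 1)⁻¹ a⁻¹ := by
  rw [← image_image (fun x => x⁻¹) (a + ·), image_const_add_Ioo, add_zero, image_inv_eq_inv]
  ext x
  simp only [Set.mem_inv, mem_Ioo]
  have ha1 : 0 < a + 1 := by linarith
  constructor
  · rintro ⟨h1, h2⟩
    have hx : 0 < x := inv_pos.1 (ha.trans h1)
    exact ⟨(inv_lt_comm₀ hx ha1).1 h2, (lt_inv_comm₀ ha hx).1 h1⟩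
  · rintro ⟨h1, h2⟩
    have hx : 0 < x := (inv_pos.2 ha1).trans h1
    exact ⟨(lt_inv_comm₀ ha hx).2 h2, (inv_lt_comm₀ hx ha1).2 h1⟩
lemma Ioo_zero_one_ae_eq_iUnion_Ioo_inv :
    Ioo (0 : ℝ) 1 =ᵐ[volume] ⋃ k : ℕ, Ioo ((k : ℝ) + 1 + 1)⁻¹ ((k : ℝ) + 1)⁻¹ := by
  have h_sub : ⋃ k : ℕ, Ioo ((k : ℝ) + 1 + 1)⁻¹ ((k : ℝ) + 1)⁻¹ ⊆ Ioo 0 1 := by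
    refine iUnion_subset fun k => Ioo_subset_Ioo (by positivity) ?_
    exact inv_le_one_of_one_le₀ (by simp)
  have h_diff : Ioo 0 1 \ ⋃ k : ℕ, Ioo ((k : ℝ) + 1 + 1)⁻¹ ((k : ℝ) + 1)⁻¹ ⊆
      range fun k : ℕ => ((k : ℝ) + 1)⁻¹ := by
    rintro x ⟨⟨hx0, hx1⟩, hx⟩
    by_contra hx_range
    have h_one_lt : 1 < x⁻¹ := one_lt_inv₀ hx0 |>.2 hx1
    obtain ⟨k, hk⟩ : ∃ k : ℕ, ⌊x⁻¹⌋₊ = k + 1 :=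
      Nat.exists_eq_add_one.2 (Nat.floor_pos.2 h_one_lt.le)
    have h_ne : x⁻¹ ≠ (k : ℝ) + 1 := fun h => hx_range ⟨k, by simp [← h]⟩
    have h_floor : ((k : ℝ) + 1) ≤ x⁻¹ := by
      exact_mod_cast hk ▸ Nat.floor_le (inv_pos.2 hx0).le
    have h_ceil : x⁻¹ < (k : ℝ) + 1 + 1 := by
      exact_mod_cast hk ▸ Nat.lt_floor_add_one x⁻¹
    refine hx (mem_iUnion.2 ⟨k, ?_⟩)
    rw [← image_inv_add_Ioo (by positivity)]
    refine ⟨x⁻¹ - ((k : ℝ) + 1), ⟨?_, ?_⟩, by simp⟩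
    · exact sub_pos.2 (lt_of_le_of_ne h_floor h_ne.symm)
    · linarith
  refine ae_eq_set.2 ⟨measure_mono_null h_diff ((countable_range _).measure_zero _), ?_⟩
  rw [sdiff_eq_empty.2 h_sub, measure_empty]

lemma lintegral_Ioo_zero_one_eq_tsum (g : ℝ → ℝ≥0∞) :
    ∫⁻ x in Ioo 0 1, g x = ∑' k : ℕ,
      ∫⁻ u in Ioo 0 1, ENNReal.ofReal (1 / ((k : ℝ) + 1 + u) ^ 2) * g ((k + 1 + u)⁻¹) := by
  have h_anti : Antitone fun k : ℕ => ((k : ℝ) + 1)⁻¹ := fun i j hij =>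
    inv_anti₀ (by positivity) (by gcongr)
  have h_disj := h_anti.pairwise_disjoint_on_Ioo_succ
  simp only [Order.succ_eq_add_one, Nat.cast_add_one] at h_disj
  rw [setLIntegral_congr Ioo_zero_one_ae_eq_iUnion_Ioo_inv,
    lintegral_iUnion (fun _ => measurableSet_Ioo) h_disj]
  refine tsum_congr fun k => ?_
  have ha : (0 : ℝ) < k + 1 := by positivity
  have h_deriv : ∀ u ∈ Ioo (0 : ℝ) 1,
      HasDerivWithinAt (fun u => ((k : ℝ) + 1 + u)⁻¹) (-1 / ((k : ℝ) + 1 + u) ^ 2) (Ioo 0 1) u :=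
    fun u hu => by
      simpa using ((hasDerivWithinAt_id u _).const_add ((k : ℝ) + 1)).fun_inv
        (by linarith [hu.1] : (k : ℝ) + 1 + u ≠ 0)
  have h_inj : InjOn (fun u => ((k : ℝ) + 1 + u)⁻¹) (Ioo 0 1) := fun u _ v _ h => by
    simpa using h
  rw [← image_inv_add_Ioo ha, lintegral_image_eq_lintegral_abs_deriv_mul measurableSet_Ioo h_deriv
    h_inj]
  simp only [neg_div, abs_neg, abs_div, abs_one, abs_pow, sq_abs]

lemma exp_neg_le_one_sub_half {x : ℝ} (hx0 : 0 ≤ x) (hx1 : x ≤ 1) : exp (-x) ≤ 1 - x / 2 := by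
  calc exp (-x) = (exp x)⁻¹ := exp_neg x
    _ ≤ (1 + x)⁻¹ := inv_anti₀ (by linarith) (by linarith [add_one_le_exp x])
    _ ≤ 1 - x / 2 := by
      rw [inv_le_iff_one_le_mul₀ (by linarith)]
      nlinarith

lemma sum_range_mul_le_sub_sum_range {μ w : ℕ → ℝ} {s : ℝ} (hμ : ∀ k, 0 ≤ μ k)
    (hw0 : ∀ k, 0 ≤ w k) (hw1 : ∀ k, w k ≤ 1) (hs : ∀ N, ∑ k ∈ Finset.range N, μ k ≤ s)
    (M N : ℕ) :
    ∑ k ∈ Finset.range N, w k * μ k ≤ s - ∑ k ∈ Finset.range M, (1 - w k) * μ k := by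
  calc ∑ k ∈ Finset.range N, w k * μ k ≤ ∑ k ∈ Finset.range (N + M), w k * μ k :=
        Finset.sum_le_sum_of_subset_of_nonneg (by simp) fun k _ _ => mul_nonneg (hw0 k) (hμ k)
    _ = ∑ k ∈ Finset.range (N + M), μ k - ∑ k ∈ Finset.range (N + M), (1 - w k) * μ k := by
        rw [← Finset.sum_sub_distrib]
        exact Finset.sum_congr rfl fun k _ => by ring
    _ ≤ s - ∑ k ∈ Finset.range M, (1 - w k) * μ k :=
        sub_le_sub (hs _) <| Finset.sum_le_sum_of_subset_of_nonneg (by simp)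
          fun k _ _ => mul_nonneg (sub_nonneg.2 (hw1 k)) (hμ k)

lemma sum_range_one_div_mul_le {c d : ℝ} (hc : 0 < c) (hd : 0 ≤ d) (N : ℕ) :
    ∑ k ∈ Finset.range N, 1 / ((c * (k + 1) + d) * (c * (k + 1) + d + c)) ≤ 1 / (c * (c + d)) := by
  have h_diff : ∀ k : ℕ, 1 / ((c * (k + 1) + d) * (c * (k + 1) + d + c)) =
      1 / (c * (c * (k + 1) + d)) - 1 / (c * (c * ((k + 1 : ℕ) + 1) + d)) := by
    intro k
    push_cast
    field_simp
    ring
  rw [Finset.sum_congr rfl fun k _ => h_diff k, Finset.sum_range_sub']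
  simp only [Nat.cast_zero, zero_add, mul_one]
  linarith [show 0 ≤ 1 / (c * (c * ((N : ℝ) + 1) + d)) by positivity]

noncomputable def cfDecayRate (M : ℕ) : ℝ :=
  1 - (∑ k ∈ Finset.range M, 1 / ((k : ℝ) + 1)) / (12 * M)

lemma sum_range_exp_mul_le_cfDecayRate {M : ℕ} (hM : 0 < M) {c d : ℝ} (hc : 0 < c) (hd : 0 ≤ d)
    (hdc : d ≤ c) (N : ℕ) :
    ∑ k ∈ Finset.range N,
        exp (-(((k : ℝ) + 1) / M)) * (1 / ((c * (k + 1) + d) * (c * (k + 1) + d + c)))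
      ≤ cfDecayRate M * (1 / (c * (c + d))) := by
  set μ : ℕ → ℝ := fun k => 1 / ((c * (k + 1) + d) * (c * (k + 1) + d + c)) with hμ_def
  set s := 1 / (c * (c + d))
  have h_lower : ∀ k < M,
      s * (1 / ((k : ℝ) + 1)) / (12 * M) ≤ (1 - exp (-(((k : ℝ) + 1) / M))) * μ k := by
    intro k hk
    have hM' : (0 : ℝ) < M := by exact_mod_cast hM
    have h_exp := exp_neg_le_one_sub_half (by positivity) <| (div_le_one hM').2 <|
      show (k : ℝ) + 1 ≤ M by exact_mod_cast hk
    have hμk : 1 / (6 * c ^ 2 * ((k : ℝ) + 1) ^ 2) ≤ μ k := by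
      have hk0 : (0 : ℝ) ≤ k := Nat.cast_nonneg k
      refine one_div_le_one_div_of_le (by positivity) ?_
      calc (c * (k + 1) + d) * (c * (k + 1) + d + c) ≤ (2 * c * (k + 1)) * (3 * c * (k + 1)) :=
            mul_le_mul (by nlinarith) (by nlinarith) (by positivity) (by positivity)
        _ = 6 * c ^ 2 * ((k : ℝ) + 1) ^ 2 := by ring
    have hs : s ≤ 1 / c ^ 2 := one_div_le_one_div_of_le (by positivity) (by nlinarith)
    calc s * (1 / ((k : ℝ) + 1)) / (12 * M) ≤ 1 / c ^ 2 * (1 / ((k : ℝ) + 1)) / (12 * M) := by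
          gcongr
      _ = ((k : ℝ) + 1) / M / 2 * (1 / (6 * c ^ 2 * ((k : ℝ) + 1) ^ 2)) := by
          field_simp
          ring
      _ ≤ (1 - exp (-(((k : ℝ) + 1) / M))) * μ k :=
          mul_le_mul (by linarith) hμk (by positivity)
            (by linarith [show 0 ≤ ((k : ℝ) + 1) / M / 2 by positivity])
  calc _ ≤ s - ∑ k ∈ Finset.range M, (1 - exp (-(((k : ℝ) + 1) / M))) * μ k :=
        sum_range_mul_le_sub_sum_range (fun k => by positivity) (fun k => (exp_pos _).le)
          (fun k => exp_le_one_iff.2 (neg_nonpos.2 (by positivity)))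
          (sum_range_one_div_mul_le hc hd) M N
    _ ≤ s - ∑ k ∈ Finset.range M, s * (1 / ((k : ℝ) + 1)) / (12 * M) := by
        gcongr with k hk
        exact h_lower k (Finset.mem_range.1 hk)
    _ = cfDecayRate M * s := by
        rw [cfDecayRate, ← Finset.sum_div, ← Finset.mul_sum]
        ring

lemma tsum_ofReal_exp_mul_le_cfDecayRate {M : ℕ} (hM : 0 < M) {c d : ℝ} (hc : 0 < c)
    (hd : 0 ≤ d) (hdc : d ≤ c) :
    ∑' k : ℕ, ENNReal.ofReal (exp (-(((k : ℝ) + 1) / M))) *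
        ENNReal.ofReal (1 / ((c * (k + 1) + d) * (c * (k + 1) + d + c)))
      ≤ ENNReal.ofReal (cfDecayRate M) * ENNReal.ofReal (1 / (c * (c + d))) := by
  refine ENNReal.tsum_le_of_sum_range_le fun N => ?_
  simp_rw [← ENNReal.ofReal_mul (exp_pos _).le]
  rw [← ENNReal.ofReal_sum_of_nonneg fun k _ => by positivity, ← ENNReal.ofReal_mul' (by positivity)]
  exact ENNReal.ofReal_le_ofReal (sum_range_exp_mul_le_cfDecayRate hM hc hd hdc N)

lemma lintegral_one_div_sq_le {c d : ℝ} (hc : 0 < c) (hd : 0 ≤ d) (hdc : d ≤ c) :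
    ∫⁻ x in Ioo 0 1, ENNReal.ofReal (1 / (c + d * x) ^ 2)
      ≤ 2 * ENNReal.ofReal (1 / (c * (c + d))) := by
  calc ∫⁻ x in Ioo 0 1, ENNReal.ofReal (1 / (c + d * x) ^ 2)
      ≤ ∫⁻ _ in Ioo (0 : ℝ) 1, ENNReal.ofReal (1 / c ^ 2) :=
        setLIntegral_mono' measurableSet_Ioo fun x hx => ENNReal.ofReal_le_ofReal <|
          one_div_le_one_div_of_le (by positivity) <|
            pow_le_pow_left₀ hc.le (by nlinarith [mul_nonneg hd hx.1.le]) 2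
    _ = ENNReal.ofReal (1 / c ^ 2) := by simp
    _ ≤ ENNReal.ofReal (2 * (1 / (c * (c + d)))) := by
        refine ENNReal.ofReal_le_ofReal ?_
        rw [div_le_iff₀ (by positivity)]
        field_simp
        nlinarith
    _ = 2 * ENNReal.ofReal (1 / (c * (c + d))) := by
        rw [ENNReal.ofReal_mul zero_le_two, ENNReal.ofReal_ofNat]

/-- The densities `1 / (c + d x)²` with `0 ≤ d ≤ c` are carried into each other by the inverse
branches `x = 1 / (k + u)` of the Gauss map; this is what lets the induction on `n` close. -/
lemma lintegral_exp_neg_cfSum_le {M : ℕ} (hM : 0 < M) (n : ℕ) {c d : ℝ} (hc : 0 < c) (hd : 0 ≤ d)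
    (hdc : d ≤ c) :
    ∫⁻ x in Ioo 0 1, ENNReal.ofReal (exp (-(cfSum n x / M)) / (c + d * x) ^ 2)
      ≤ 2 * ENNReal.ofReal (cfDecayRate M) ^ n * ENNReal.ofReal (1 / (c * (c + d))) := by
  induction n generalizing c d with
  | zero =>
    simpa [cfSum] using lintegral_one_div_sq_le hc hd hdc
  | succ n ih =>
    rw [lintegral_Ioo_zero_one_eq_tsum]
    calc _ = ∑' k : ℕ, ENNReal.ofReal (exp (-(((k : ℝ) + 1) / M))) *
          ∫⁻ u in Ioo 0 1, ENNReal.ofReal (exp (-(cfSum n u / M)) / (c * (k + 1) + d + c * u) ^ 2) := by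
          refine tsum_congr fun k => ?_
          rw [← lintegral_const_mul' _ _ ENNReal.ofReal_ne_top]
          refine setLIntegral_congr_fun measurableSet_Ioo fun u hu => ?_
          rw [← ENNReal.ofReal_mul (by positivity), ← ENNReal.ofReal_mul (by positivity),
            one_div_sq_mul_exp_neg_cfSum_succ_inv n M c d (Ioo_subset_Ico_self hu)]
      _ ≤ ∑' k : ℕ, ENNReal.ofReal (exp (-(((k : ℝ) + 1) / M))) *
          (2 * ENNReal.ofReal (cfDecayRate M) ^ n *
            ENNReal.ofReal (1 / ((c * (k + 1) + d) * (c * (k + 1) + d + c)))) := by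
          gcongr with k
          exact ih (by positivity) hc.le (by nlinarith [Nat.cast_nonneg (α := ℝ) k])
      _ = 2 * ENNReal.ofReal (cfDecayRate M) ^ n * ∑' k : ℕ,
          ENNReal.ofReal (exp (-(((k : ℝ) + 1) / M))) *
            ENNReal.ofReal (1 / ((c * (k + 1) + d) * (c * (k + 1) + d + c))) := by
          rw [← ENNReal.tsum_mul_left]
          exact tsum_congr fun k => by ring
      _ ≤ 2 * ENNReal.ofReal (cfDecayRate M) ^ n *
          (ENNReal.ofReal (cfDecayRate M) * ENNReal.ofReal (1 / (c * (c + d)))) := by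
          gcongr
          exact tsum_ofReal_exp_mul_le_cfDecayRate hM hc hd hdc
      _ = _ := by ring

lemma volume_restrict_setOf_cfSum_le_le {M : ℕ} (hM : 0 < M) (C : ℝ) (n : ℕ) :
    volume.restrict (Ioo 0 1) {x | cfSum n x ≤ C * n}
      ≤ 2 * ENNReal.ofReal (exp (C / M) * cfDecayRate M) ^ n := by
  set f : ℝ → ℝ≥0∞ := fun x => ENNReal.ofReal (exp ((C * n - cfSum n x) / M))
  have hf : Measurable f :=
    ENNReal.measurable_ofReal.comp <| measurable_exp.comp <|
      (measurable_const.sub (measurable_cfSum n)).div_const _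
  have h_split : ∀ x, f x = ENNReal.ofReal (exp (C / M)) ^ n *
      ENNReal.ofReal (exp (-(cfSum n x / M)) / (1 + 0 * x) ^ 2) := by
    intro x
    simp only [f]
    rw [← ENNReal.ofReal_pow (exp_pos _).le, ← ENNReal.ofReal_mul (by positivity), ← exp_nat_mul,
      zero_mul, add_zero, one_pow, div_one, ← exp_add]
    congr 2
    ring
  calc volume.restrict (Ioo 0 1) {x | cfSum n x ≤ C * n}
      ≤ volume.restrict (Ioo 0 1) {x | 1 ≤ f x} :=
        measure_mono fun x hx => ENNReal.one_le_ofReal.2 <| one_le_exp <|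
          div_nonneg (sub_nonneg.2 hx) M.cast_nonneg
    _ ≤ ∫⁻ x in Ioo 0 1, f x := by
        simpa using mul_meas_ge_le_lintegral₀ hf.aemeasurable (μ := volume.restrict (Ioo 0 1)) 1
    _ = ENNReal.ofReal (exp (C / M)) ^ n *
        ∫⁻ x in Ioo 0 1, ENNReal.ofReal (exp (-(cfSum n x / M)) / (1 + 0 * x) ^ 2) := by
        simp_rw [h_split]
        exact lintegral_const_mul' _ _ (ENNReal.pow_ne_top ENNReal.ofReal_ne_top)
    _ ≤ ENNReal.ofReal (exp (C / M)) ^ n *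
        (2 * ENNReal.ofReal (cfDecayRate M) ^ n * ENNReal.ofReal (1 / (1 * (1 + 0)))) := by
        gcongr
        exact lintegral_exp_neg_cfSum_le hM n one_pos le_rfl zero_le_one
    _ = 2 * ENNReal.ofReal (exp (C / M) * cfDecayRate M) ^ n := by
        rw [ENNReal.ofReal_mul (exp_pos _).le, mul_pow]
        norm_num
        ring

lemma exists_exp_div_mul_cfDecayRate_lt_one (C : ℝ) :
    ∃ M : ℕ, 0 < M ∧ exp (C / M) * cfDecayRate M < 1 := by
  obtain ⟨M, hM⟩ := (tendsto_sum_range_one_div_nat_succ_atTop.eventually_gt_atTop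
    (12 * max C 0)).and (eventually_gt_atTop 0) |>.exists
  refine ⟨M, hM.2, ?_⟩
  have hM' : (0 : ℝ) < M := by exact_mod_cast hM.2
  set H := ∑ k ∈ Finset.range M, 1 / ((k : ℝ) + 1)
  calc exp (C / M) * cfDecayRate M ≤ exp (C / M) * exp (-(H / (12 * M))) := by
        gcongr
        exact one_sub_le_exp_neg _
    _ = exp ((C - H / 12) / M) := by
        rw [← exp_add]
        congr 1
        field_simp
        ring
    _ < 1 := by
        refine exp_lt_one_iff.2 (div_neg_of_neg_of_pos ?_ hM')
        linarith [le_max_left C 0, hM.1]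

lemma ae_eventually_mul_lt_cfSum (C : ℝ) :
    ∀ᵐ x ∂volume.restrict (Ioo 0 1), ∀ᶠ n : ℕ in atTop, C * n < cfSum n x := by
  obtain ⟨M, hM, hq⟩ := exists_exp_div_mul_cfDecayRate_lt_one C
  have h_summable : ∑' n : ℕ, volume.restrict (Ioo 0 1) {x | cfSum n x ≤ C * n} ≠ ⊤ := by
    refine ne_top_of_le_ne_top ?_ (ENNReal.tsum_le_tsum (volume_restrict_setOf_cfSum_le_le hM C))
    rw [ENNReal.tsum_mul_left]
    exact ENNReal.mul_ne_top (by simp)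
      (tsum_geometric_lt_top.2 (ENNReal.ofReal_lt_one.2 hq)).ne
  filter_upwards [ae_eventually_notMem h_summable] with x hx
  exact hx.mono fun n hn => not_le.1 hn

/-- For Lebesgue-almost every `r ∈ (0,1)`, the averages of the continued
fraction coefficients `(a_1(r) + ⋯ + a_n(r))/n` tend to `+∞`. -/
theorem cf_coefficients_average_infinite :
    ∀ᵐ r ∂(volume.restrict (Set.Ioo (0 : ℝ) 1)),
      Tendsto (fun n : ℕ => (∑ i ∈ Finset.range n, (cfCoeff r i : ℝ)) / n)
        atTop atTop := by
  have h_all : ∀ᵐ r ∂(volume.restrict (Ioo (0 : ℝ) 1)), ∀ C : ℕ, ∀ᶠ n : ℕ in atTop,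
      (C : ℝ) * n < cfSum n r :=
    ae_all_iff.2 fun C => ae_eventually_mul_lt_cfSum C
  filter_upwards [h_all] with r hr
  refine tendsto_atTop.2 fun b => ?_
  obtain ⟨C, hC⟩ := exists_nat_ge b
  filter_upwards [hr C, eventually_gt_atTop 0] with n hn hn0
  exact hC.trans <| (le_div_iff₀ (by positivity)).2 hn.le
end

section
/- In the unit disc, let θ(r, R) be the angle at the center subtended by the intersection of the circle of radius R ≥ 1/2 centered at the origin with a circle of radius r ≤ 1/2 internally tangent to the unit circle, assuming R + 2r − 1 ≥ 0. Then there is a constant K > 0 (independent of r and R) such that (1/K)·√((1−R)(R+2r−1)) ≤ θ(r, R) ≤ K·√((1−R)(R+2r−1)). -/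
/-!
Half of `θ(r, R)` is `arccos x` with `1 - x = (1 - R)(R + 2r - 1) / (2R(1 - r))`, and the
denominator `2R(1 - r)` lies in `[1/2, 2]`. Writing `1 - x = 2 sin² (arccos x / 2)`, the bounds
`2y/π ≤ sin y ≤ y` on `[0, π/2]` show that `arccos x` is comparable to `√(1 - x)`.
-/

/-- The angle at the center of the unit disc subtended by the intersection of the circle
of radius `R` centered at the origin with a circle of radius `r` internally tangent to
the unit circle (whose center is at distance `1 - r` from the origin), computed from the
law of cosines: `r² = (1−r)² + R² − 2R(1−r)cos(θ/2)`. -/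
noncomputable def tangencyAngle (r R : ℝ) : ℝ :=
  2 * Real.arccos (((1 - r) ^ 2 + R ^ 2 - r ^ 2) / (2 * R * (1 - r)))

open Real

namespace Real

variable {x : ℝ}

theorem abs_sin_arccos_div_two (hx₁ : -1 ≤ x) (hx₂ : x ≤ 1) :
    |sin (arccos x / 2)| = √((1 - x) / 2) := by
  rw [abs_sin_half, cos_arccos hx₁ hx₂]

theorem two_mul_sqrt_one_sub_div_two_le_arccos (hx₁ : -1 ≤ x) (hx₂ : x ≤ 1) :
    2 * √((1 - x) / 2) ≤ arccos x := by
  have h := abs_sin_le_abs (x := arccos x / 2)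
  rw [abs_sin_arccos_div_two hx₁ hx₂, abs_of_nonneg (by linarith [arccos_nonneg x])] at h
  linarith

theorem arccos_le_pi_mul_sqrt_one_sub_div_two (hx₁ : -1 ≤ x) (hx₂ : x ≤ 1) :
    arccos x ≤ π * √((1 - x) / 2) := by
  have h₀ : 0 ≤ arccos x / 2 := by linarith [arccos_nonneg x]
  have h := mul_le_sin h₀ (by linarith [arccos_le_pi x])
  rw [← abs_of_nonneg (le_trans (by positivity) h), abs_sin_arccos_div_two hx₁ hx₂] at h
  rw [div_mul_div_comm, div_le_iff₀ (by positivity)] at h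
  linarith

end Real

theorem tangencyAngle_eq_two_mul_arccos {r R : ℝ} (hR : R ≠ 0) (hr : r ≠ 1) :
    tangencyAngle r R = 2 * arccos (1 - (1 - R) * (R + 2 * r - 1) / (2 * R * (1 - r))) := by
  have : 1 - r ≠ 0 := sub_ne_zero.mpr hr.symm
  rw [tangencyAngle]
  congr 2
  field_simp
  ring

/-- There is a universal constant `K > 0` such that for `1/2 ≤ R ≤ 1`,
`0 < r ≤ 1/2` and `R + 2r − 1 ≥ 0`, the angle `θ(r,R)` satisfies
`(1/K)√((1−R)(R+2r−1)) ≤ θ(r,R) ≤ K√((1−R)(R+2r−1))`. -/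
theorem tangency_angle_estimate :
    ∃ K : ℝ, 0 < K ∧ ∀ r R : ℝ, 0 < r → r ≤ 1 / 2 → 1 / 2 ≤ R → R ≤ 1 →
      0 ≤ R + 2 * r - 1 →
      (1 / K) * Real.sqrt ((1 - R) * (R + 2 * r - 1)) ≤ tangencyAngle r R ∧
      tangencyAngle r R ≤ K * Real.sqrt ((1 - R) * (R + 2 * r - 1)) := by
  refine ⟨2 * π, by positivity, fun r R hr hr₂ hR₂ hR₁ hD₀ => ?_⟩
  rw [tangencyAngle_eq_two_mul_arccos (by linarith) (by linarith)]
  set D := (1 - R) * (R + 2 * r - 1)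
  set c := 2 * R * (1 - r)
  have hD : 0 ≤ D := mul_nonneg (by linarith) hD₀
  have hc₁ : 1 / 2 ≤ c := by nlinarith
  have hc₂ : c ≤ 2 := by nlinarith
  have hx₁ : -1 ≤ 1 - D / c := by
    have : D / c ≤ 2 := by rw [div_le_iff₀ (by linarith)]; nlinarith
    linarith
  have hx₂ : 1 - D / c ≤ 1 := by linarith [div_nonneg hD (by linarith : (0 : ℝ) ≤ c)]
  have hhalf : (1 - (1 - D / c)) / 2 = D / (c * 2) := by rw [sub_sub_cancel, div_div]
  have hlo := two_mul_sqrt_one_sub_div_two_le_arccos hx₁ hx₂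
  have hhi := arccos_le_pi_mul_sqrt_one_sub_div_two hx₁ hx₂
  rw [hhalf] at hlo hhi
  have hsqrt_lo : √D / 2 ≤ √(D / (c * 2)) := by
    rw [le_sqrt (by positivity) (by positivity), div_pow, sq_sqrt hD]
    gcongr
    linarith
  have hsqrt_hi : √(D / (c * 2)) ≤ √D :=
    sqrt_le_sqrt (by rw [div_le_iff₀ (by linarith)]; nlinarith)
  constructor
  · rw [one_div_mul_eq_div, div_le_iff₀ (by positivity)]
    nlinarith [pi_gt_three, sqrt_nonneg D]
  · nlinarith [pi_pos]
end

section
/- In the Poincaré disc 𝔻 with metric of curvature −1, fix a point y ∈ 𝔻 and let H be a horoball with y ∉ H. Let γ₀ be the geodesic from y to the point at infinity of H, entering H at the point π_H(y). Then for any geodesic ray γ from y that enters H, with entry point γ_u, the distance along the boundary horocycle ∂H between γ_u and π_H(y) satisfies d_{∂H}(γ_u, π_H(y)) ≤ 1. -/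
/-! With `a = |Re y - c|` and `b = Im y`, the circle equation gives `a² + b² = ρ²`, so the
horizontal offset `s = √(ρ² - 1)` of the entry point from `c` satisfies `a² - s² = 1 - b² ∈ [0, 1]`.
For nonnegative reals `|a - s|² ≤ |a - s| (a + s) = |a² - s²|`, hence `|s - a| ≤ 1`. -/

lemma sq_abs_sub_le_abs_sq_sub_sq {a b : ℝ} (ha : 0 ≤ a) (hb : 0 ≤ b) :
    |a - b| ^ 2 ≤ |a ^ 2 - b ^ 2| := by
  have hab : |a - b| ≤ a + b := abs_sub_le_iff.mpr ⟨by linarith, by linarith⟩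
  calc |a - b| ^ 2 = |a - b| * |a - b| := sq _
    _ ≤ |a + b| * |a - b| := by
      rw [abs_of_nonneg (add_nonneg ha hb)]
      exact mul_le_mul_of_nonneg_right hab (abs_nonneg _)
    _ = |a ^ 2 - b ^ 2| := by rw [← abs_mul, sq_sub_sq]

lemma abs_sqrt_sq_sub_one_sub_le_one {a b ρ : ℝ} (ha : 0 ≤ a) (hb : b ^ 2 ≤ 1) (hρ : 1 ≤ ρ)
    (h : a ^ 2 + b ^ 2 = ρ ^ 2) : |√(ρ ^ 2 - 1) - a| ≤ 1 := by
  have hs : √(ρ ^ 2 - 1) ^ 2 = ρ ^ 2 - 1 := Real.sq_sqrt (by nlinarith)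
  have hdiff : |a ^ 2 - √(ρ ^ 2 - 1) ^ 2| ≤ 1 := by
    rw [hs, abs_le]
    constructor <;> linarith [sq_nonneg b]
  rw [abs_sub_comm, ← sq_le_one_iff_abs_le_one]
  simpa only [sq_abs] using (sq_abs_sub_le_abs_sq_sub_sq ha (Real.sqrt_nonneg _)).trans hdiff

lemma sq_norm_sub_ofReal (y : ℂ) (c : ℝ) :
    ‖y - (c : ℂ)‖ ^ 2 = (y.re - c) ^ 2 + y.im ^ 2 := by
  rw [Complex.sq_norm, Complex.normSq_apply]
  simp only [Complex.sub_re, Complex.sub_im, Complex.ofReal_re, Complex.ofReal_im, sub_zero]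
  ring

/-- STATEMENT 18 (entry points into a horoball are close to the projection), in the
upper half-plane model: let the horoball be `H = {Im z ≥ 1}` (with ideal point `∞`),
and let `y` be a point with `0 < Im y < 1`, so `y ∉ H`.  The geodesic `γ₀` from `y` to
`∞` is the vertical line through `y`, entering `H` at `π_H(y) = Re y + i`.  Any other
geodesic from `y` entering `H` is a Euclidean semicircle of center `c ∈ ℝ` and radius
`ρ ≥ 1` through `y` (so `|y − c| = ρ`); travelling from `y` into `H`, its entry point
into `H` is `u + i` with `u = c ± √(ρ² − 1)`, the sign being that of the side of `c`
on which `y` lies.  The distance along the horocycle `∂H = {Im z = 1}` (which agrees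
with the Euclidean distance there) between the entry point and `π_H(y)` is at most 1:
`|u − Re y| ≤ 1`. -/
theorem horoball_entry_near_projection (y : ℂ) (c ρ : ℝ)
    (hy0 : 0 < y.im) (hy1 : y.im < 1)
    (hρ : 1 ≤ ρ) (hon : ‖y - (c : ℂ)‖ = ρ) :
    |(if c ≤ y.re then c + Real.sqrt (ρ ^ 2 - 1) else c - Real.sqrt (ρ ^ 2 - 1)) - y.re|
      ≤ 1 := by
  have hcirc : |y.re - c| ^ 2 + y.im ^ 2 = ρ ^ 2 := by
    rw [sq_abs, ← sq_norm_sub_ofReal, hon]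
  have him : y.im ^ 2 ≤ 1 := by nlinarith
  have key := abs_sqrt_sq_sub_one_sub_le_one (abs_nonneg _) him hρ hcirc
  split_ifs with hc
  · rw [abs_of_nonneg (sub_nonneg.mpr hc)] at key
    rwa [show c + √(ρ ^ 2 - 1) - y.re = √(ρ ^ 2 - 1) - (y.re - c) by ring]
  · rw [abs_sub_comm y.re c, abs_of_pos (sub_pos.mpr (not_le.mp hc))] at key
    rwa [show c - √(ρ ^ 2 - 1) - y.re = -(√(ρ ^ 2 - 1) - (c - y.re)) by ring, abs_neg]
end
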